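/- arXiv:1501.07768 — 2 statements merged into one kernel-verified Lean document; each statement's English description precedes it below -/
import Mathlib

section
/- Let (X_n, Y_n) be ℝ²-valued random variables, (x, y) ∈ ℝ² with y ≠ 0, Σ a 2×2 covariance matrix, such that Y_n → y in probability, P(Y_n = 0) ≤ c^n for some c ∈ [0,1), and √n·(X_n − x, Y_n − y) converges in distribution to N(0, Σ). Let g(0)=1, g(t)=t otherwise. Then √n·(X_n/g(Y_n) − x/y) converges in distribution to N(0, Pᵀ Σ P) where P = (1/y, −x/y²)ᵀ. -/
open MeasureTheory ProbabilityTheory Filter Topology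

noncomputable def nz (x : ℝ) : ℝ := if x = 0 then 1 else x

def TendstoInDistribution {Ω E : Type*} [MeasurableSpace Ω] [MeasurableSpace E]
    [TopologicalSpace E] (P : Measure Ω) (Z : ℕ → Ω → E) (μ : Measure E) : Prop :=
  ∀ f : BoundedContinuousFunction E ℝ,
    Tendsto (fun n => ∫ ω, f (Z n ω) ∂P) atTop (𝓝 (∫ x, f x ∂μ))

/-- A centered bivariate Gaussian with covariance matrix `S`, characterized through
one-dimensional projections. -/
def IsCenteredGaussian2 (S : Matrix (Fin 2) (Fin 2) ℝ) (μ : Measure (ℝ × ℝ)) : Prop :=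
  ∀ a b : ℝ, μ.map (fun p => a * p.1 + b * p.2)
    = gaussianReal 0 (a * (S 0 0 * a + S 0 1 * b) + b * (S 1 0 * a + S 1 1 * b)).toNNReal

/-! Delta method for a ratio. On the event `|Y n - y| < |y| / 2` one has
`√n (X n / Y n - x / y) = (y U n - x V n) / (y Y n)`, where `(U n, V n)` is the normalised pair of
the CLT hypothesis. Replacing the denominator `Y n` by a continuous function of `Y n` that never
vanishes and agrees with it near `y` changes the ratio only off that event, whose probability tends
to zero; for the modified ratio, Slutsky's theorem and the continuous mapping theorem give the
Gaussian limit `(U, V) ↦ U / y - x V / y²`. -/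

theorem tendstoInDistribution_map_iff {Ω Ω' E : Type*} [MeasurableSpace Ω] [MeasurableSpace Ω']
    [TopologicalSpace E] [MeasurableSpace E] [OpensMeasurableSpace E]
    {P : Measure Ω} [IsProbabilityMeasure P] {μ : Measure Ω'} [IsProbabilityMeasure μ]
    {Z : ℕ → Ω → E} {W : Ω' → E} (hZ : ∀ n, AEMeasurable (Z n) P) (hW : AEMeasurable W μ) :
    _root_.TendstoInDistribution P Z (μ.map W) ↔
      MeasureTheory.TendstoInDistribution Z atTop W (fun _ => P) μ := by
  refine ⟨fun h => ⟨hZ, hW, ?_⟩, fun h f => ?_⟩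
  · refine ProbabilityMeasure.tendsto_iff_forall_integral_tendsto.2 fun f => ?_
    simpa only [ProbabilityMeasure.coe_mk, integral_map (hZ _) f.continuous.aestronglyMeasurable,
      integral_map hW f.continuous.aestronglyMeasurable] using h f
  · simpa only [ProbabilityMeasure.coe_mk, integral_map (hZ _) f.continuous.aestronglyMeasurable,
      integral_map hW f.continuous.aestronglyMeasurable] using
      ProbabilityMeasure.tendsto_iff_forall_integral_tendsto.1 h.tendsto f

theorem MeasureTheory.TendstoInMeasure.tendstoInMeasure_sub_zero_of_eq_of_dist_lt {Ω ι E F : Type*}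
    [MeasurableSpace Ω] [PseudoMetricSpace E] [SeminormedAddCommGroup F] {P : Measure Ω}
    {l : Filter ι} {Y : ι → Ω → E} {y : E} (hY : TendstoInMeasure P Y l (fun _ => y))
    {δ : ℝ} (hδ : 0 < δ) {Z W : ι → Ω → F} (hZW : ∀ n ω, dist (Y n ω) y < δ → Z n ω = W n ω) :
    TendstoInMeasure P (Z - W) l 0 := by
  refine tendstoInMeasure_iff_dist.2 fun ε hε => ?_
  refine tendsto_of_tendsto_of_tendsto_of_le_of_le tendsto_const_nhds
    (tendstoInMeasure_iff_dist.1 hY δ hδ) (fun _ => zero_le) fun n => measure_mono ?_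
  intro ω hω
  by_contra hfar
  have hdist : dist (Y n ω) y < δ := not_le.1 hfar
  simp only [Set.mem_ofPred_eq, Pi.sub_apply, Pi.zero_apply, hZW n ω hdist, sub_self,
    dist_self] at hω
  exact hε.not_ge hω

noncomputable def clampRatio (y t : ℝ) : ℝ := y * max (t / y) (1 / 2)

theorem continuous_clampRatio (y : ℝ) : Continuous (clampRatio y) := by
  unfold clampRatio; fun_prop

theorem clampRatio_ne_zero {y : ℝ} (hy : y ≠ 0) (t : ℝ) : clampRatio y t ≠ 0 :=
  mul_ne_zero hy (lt_max_of_lt_right one_half_pos).ne'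

theorem clampRatio_eq_of_dist_lt {y t : ℝ} (hy : y ≠ 0) (ht : dist t y < |y| / 2) :
    clampRatio y t = t := by
  have hclose : |t / y - 1| < 1 / 2 := by
    rw [div_sub_one hy, abs_div, div_lt_iff₀ (abs_pos.2 hy)]
    rw [Real.dist_eq] at ht
    linarith
  have : 1 / 2 ≤ t / y := by linarith [(abs_lt.1 hclose).1]
  rw [clampRatio, max_eq_left this, mul_div_cancel₀ _ hy]

theorem measurable_nz : Measurable nz :=
  Measurable.ite (measurableSet_singleton 0) measurable_const measurable_id

theorem stmt_9_general {Ω : Type*} [MeasurableSpace Ω] (P : Measure Ω) [IsProbabilityMeasure P]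
    (X Y : ℕ → Ω → ℝ) (hX : ∀ n, Measurable (X n)) (hY : ∀ n, Measurable (Y n))
    (x y : ℝ) (hy : y ≠ 0)
    (S : Matrix (Fin 2) (Fin 2) ℝ)
    (hYconv : TendstoInMeasure P Y atTop (fun _ => y))
    (μS : Measure (ℝ × ℝ)) [IsProbabilityMeasure μS] (hgauss : IsCenteredGaussian2 S μS)
    (hclt : TendstoInDistribution P
      (fun n ω => (Real.sqrt n * (X n ω - x), Real.sqrt n * (Y n ω - y))) μS) :
    TendstoInDistribution P
      (fun n ω => Real.sqrt n * (X n ω / nz (Y n ω) - x / y))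
      (gaussianReal 0
        ((1 / y) * (S 0 0 * (1 / y) + S 0 1 * (-x / y ^ 2))
          + (-x / y ^ 2) * (S 1 0 * (1 / y) + S 1 1 * (-x / y ^ 2))).toNNReal) := by
  set G : (ℝ × ℝ) × ℝ → ℝ := fun q => (y * q.1.1 - x * q.1.2) / (y * clampRatio y q.2)
  have hG : Continuous G := by
    refine Continuous.div (by fun_prop) ?_ fun q => mul_ne_zero hy (clampRatio_ne_zero hy _)
    exact continuous_const.mul ((continuous_clampRatio y).comp continuous_snd)
  have hT_meas : ∀ n : ℕ, Measurable fun ω => Real.sqrt n * (X n ω / nz (Y n ω) - x / y) :=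
    fun n => (((hX n).div (measurable_nz.comp (hY n))).sub_const _).const_mul _
  have hV_meas : ∀ n : ℕ,
      Measurable fun ω => (Real.sqrt n * (X n ω - x), Real.sqrt n * (Y n ω - y)) :=
    fun n => by fun_prop
  have hCLT := (tendstoInDistribution_map_iff (fun n => (hV_meas n).aemeasurable)
    aemeasurable_id).1 (by rwa [Measure.map_id])
  have hW := hCLT.continuous_comp_prodMk_of_tendstoInMeasure_const hG hYconv
    fun n => (hY n).aemeasurable
  have hG_at_y : (fun p => G (p, y)) = fun p : ℝ × ℝ => 1 / y * p.1 + -x / y ^ 2 * p.2 := by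
    funext p
    simp only [G, clampRatio, div_self hy, max_eq_left one_half_lt_one.le]
    field_simp
    ring
  rw [← hgauss, ← hG_at_y]
  refine (tendstoInDistribution_map_iff (fun n => (hT_meas n).aemeasurable)
    (hG.comp (by fun_prop)).aemeasurable).2
    (tendstoInDistribution_of_tendstoInMeasure_sub _ _ hW ?_ fun n => (hT_meas n).aemeasurable)
  refine hYconv.tendstoInMeasure_sub_zero_of_eq_of_dist_lt (half_pos (abs_pos.2 hy))
    fun n ω hω => ?_
  have hclamp := clampRatio_eq_of_dist_lt hy hω
  have hYn : Y n ω ≠ 0 := hclamp ▸ clampRatio_ne_zero hy _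
  simp only [G, nz, if_neg hYn, hclamp]
  field_simp
  ring

theorem stmt_9 {Ω : Type*} [MeasurableSpace Ω] (P : Measure Ω) [IsProbabilityMeasure P]
    (X Y : ℕ → Ω → ℝ) (hX : ∀ n, Measurable (X n)) (hY : ∀ n, Measurable (Y n))
    (x y : ℝ) (hy : y ≠ 0)
    (S : Matrix (Fin 2) (Fin 2) ℝ) (hS : S.PosSemidef)
    (hYconv : TendstoInMeasure P Y atTop (fun _ => y))
    (c : ℝ) (hc : c ∈ Set.Ico (0 : ℝ) 1)
    (hzero : ∀ n, P {ω | Y n ω = 0} ≤ ENNReal.ofReal (c ^ n))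
    (μS : Measure (ℝ × ℝ)) [IsProbabilityMeasure μS] (hgauss : IsCenteredGaussian2 S μS)
    (hclt : TendstoInDistribution P
      (fun n ω => (Real.sqrt n * (X n ω - x), Real.sqrt n * (Y n ω - y))) μS) :
    TendstoInDistribution P
      (fun n ω => Real.sqrt n * (X n ω / nz (Y n ω) - x / y))
      (gaussianReal 0
        ((1 / y) * (S 0 0 * (1 / y) + S 0 1 * (-x / y ^ 2))
          + (-x / y ^ 2) * (S 1 0 * (1 / y) + S 1 1 * (-x / y ^ 2))).toNNReal) :=
  stmt_9_general P X Y hX hY x y hy S hYconv μS hgauss hclt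
end

section
/- Let (X_n, Y_n, X'_n, Y'_n) be ℝ⁴-valued random variables, (x, y, x', y') ∈ ℝ⁴ with y ≠ 0 and y' ≠ 0, Σ a 4×4 covariance matrix, such that Y_n → y and Y'_n → y' in probability, P(Y_n = 0) ≤ c^n and P(Y'_n = 0) ≤ c^n for some c ∈ [0,1), and √n·(X_n − x, Y_n − y, X'_n − x', Y'_n − y') converges in distribution to N(0, Σ). With g(0)=1, g(t)=t otherwise, the pair √n·(X_n/g(Y_n) − x/y, X'_n/g(Y'_n) − x'/y') converges in distribution to N(0, Pᵀ Σ P), where P is the 4×2 matrix with columns (1/y, −x/y², 0, 0)ᵀ and (0, 0, 1/y', −x'/(y')²)ᵀ. -/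
open MeasureTheory ProbabilityTheory Filter Topology Matrix
open scoped ENNReal NNReal

/-- A centered Gaussian vector with covariance matrix `S`, characterized through
one-dimensional projections. -/
def IsCenteredGaussianVec {m : ℕ} (S : Matrix (Fin m) (Fin m) ℝ)
    (μ : Measure (Fin m → ℝ)) : Prop :=
  ∀ a : Fin m → ℝ, μ.map (fun v => ∑ i, a i * v i)
    = gaussianReal 0 (∑ i, ∑ j, a i * S i j * a j).toNNReal

lemma tight_of_tendstoInDistribution {Ω : Type*} [MeasurableSpace Ω] {P : Measure Ω}
    [IsProbabilityMeasure P] {E : Type*} [MeasurableSpace E]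
    [NormedAddCommGroup E] [BorelSpace E] {Z : ℕ → Ω → E} (hZ : ∀ n, Measurable (Z n))
    {μ : Measure E} [IsProbabilityMeasure μ] (h : TendstoInDistribution P Z μ)
    (e : ℝ) (he : 0 < e) :
    ∃ M : ℝ, 0 < M ∧ ∀ᶠ n in atTop, P {ω | M ≤ ‖Z n ω‖} ≤ ENNReal.ofReal e := by
  have hlim := (ProbabilityMeasure.tendsto_iff_forall_integral_tendsto (F := atTop)
    (μs := fun n => (⟨P.map (Z n), Measure.isProbabilityMeasure_map (hZ n).aemeasurable⟩ :
      ProbabilityMeasure E))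
    (μ := ⟨μ, inferInstance⟩)).mpr (fun f => by
      have heq : ∀ n, ∫ ω, f ω ∂(P.map (Z n)) = ∫ ω, f (Z n ω) ∂P := fun n =>
        integral_map (μ := P) (hZ n).aemeasurable
          (f.continuous.aestronglyMeasurable (μ := P.map (Z n)))
      simp only [ProbabilityMeasure.coe_mk]
      simp only [heq]
      exact h f)
  have hmono : Monotone (fun k : ℕ => Metric.ball (0:E) (k:ℝ)) := fun a b hab =>
    Metric.ball_subset_ball (by exact_mod_cast hab)
  have hunion : (⋃ k : ℕ, Metric.ball (0:E) (k:ℝ)) = Set.univ := by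
    ext z
    simp only [Set.mem_iUnion, Metric.mem_ball, dist_zero_right, Set.mem_univ, iff_true]
    exact exists_nat_gt ‖z‖
  have htend : Tendsto (fun k : ℕ => μ (Metric.ball (0:E) (k:ℝ))) atTop (𝓝 1) := by
    have := tendsto_measure_iUnion_atTop (μ := μ) hmono
    rw [hunion] at this
    simpa [measure_univ, Function.comp_def] using this
  have hlt : (1 : ℝ≥0∞) - ENNReal.ofReal e < 1 :=
    ENNReal.sub_lt_self ENNReal.one_ne_top one_ne_zero (by simp [he])
  obtain ⟨k, hk⟩ := (htend.eventually_const_lt hlt).exists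
  refine ⟨(k : ℝ) + 1, by positivity, ?_⟩
  have hk2 : (1 : ℝ≥0∞) - ENNReal.ofReal e < μ (Metric.ball (0:E) ((k:ℝ)+1)) :=
    hk.trans_le (measure_mono (Metric.ball_subset_ball (by linarith)))
  have hliminf := ProbabilityMeasure.le_liminf_measure_open_of_tendsto hlim
    (Metric.isOpen_ball (x := (0:E)) (ε := (k:ℝ)+1))
  simp only [ProbabilityMeasure.coe_mk] at hliminf
  have hev : ∀ᶠ n in atTop,
      (1 : ℝ≥0∞) - ENNReal.ofReal e < P.map (Z n) (Metric.ball (0:E) ((k:ℝ)+1)) :=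
    eventually_lt_of_lt_liminf (hk2.trans_le hliminf)
  filter_upwards [hev] with n hn
  rw [Measure.map_apply (hZ n) measurableSet_ball] at hn
  have hsetc : {ω | (k:ℝ) + 1 ≤ ‖Z n ω‖} = ((Z n) ⁻¹' Metric.ball (0:E) ((k:ℝ)+1))ᶜ := by
    ext ω; simp [Metric.mem_ball, dist_zero_right, not_lt]
  rw [hsetc]
  have hs : MeasurableSet ((Z n) ⁻¹' Metric.ball (0:E) ((k:ℝ)+1)) :=
    (hZ n) measurableSet_ball
  have hsum := prob_add_prob_compl (μ := P) hs
  have h1 : (1 : ℝ≥0∞) ≤ ENNReal.ofReal e + P ((Z n) ⁻¹' Metric.ball (0:E) ((k:ℝ)+1)) :=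
    tsub_le_iff_left.mp hn.le
  have h2 : P (((Z n) ⁻¹' Metric.ball (0:E) ((k:ℝ)+1))ᶜ)
      + P ((Z n) ⁻¹' Metric.ball (0:E) ((k:ℝ)+1))
      ≤ ENNReal.ofReal e + P ((Z n) ⁻¹' Metric.ball (0:E) ((k:ℝ)+1)) := by
    rw [add_comm] at hsum
    rw [hsum]; exact h1
  exact (ENNReal.add_le_add_iff_right (measure_ne_top P _)).mp h2

lemma slutsky {Ω : Type*} [MeasurableSpace Ω] {P : Measure Ω} [IsProbabilityMeasure P]
    {E : Type*} [MeasurableSpace E] [NormedAddCommGroup E] [BorelSpace E] [ProperSpace E]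
    {Z V : ℕ → Ω → E} (hZ : ∀ n, Measurable (Z n)) (hV : ∀ n, Measurable (V n))
    {μ : Measure E} [IsProbabilityMeasure μ] (h : TendstoInDistribution P Z μ)
    (hdiff : ∀ δ : ℝ, 0 < δ → ∀ e : ℝ, 0 < e →
      ∀ᶠ n in atTop, P {ω | δ ≤ dist (V n ω) (Z n ω)} ≤ ENNReal.ofReal e) :
    TendstoInDistribution P V μ := by
  intro f
  have hZf := h f
  have hdz : Tendsto (fun n => (∫ ω, f (V n ω) ∂P) - ∫ ω, f (Z n ω) ∂P) atTop (𝓝 0) := by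
    rw [NormedAddCommGroup.tendsto_nhds_zero]
    intro ε hε
    set C : ℝ := ‖f‖ with hCdef
    have hC0 : 0 ≤ C := norm_nonneg f
    set e0 : ℝ := ε / (2 + 4 * C) with he0def
    have he0 : 0 < e0 := by positivity
    obtain ⟨M, hM, hMe⟩ := tight_of_tendstoInDistribution hZ h e0 he0
    have hK : IsCompact (Metric.closedBall (0:E) (M+1)) := isCompact_closedBall _ _
    have huc := hK.uniformContinuousOn_of_continuous f.continuous.continuousOn
    rw [Metric.uniformContinuousOn_iff] at huc
    obtain ⟨δ₀, hδ₀, hucd⟩ := huc e0 he0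
    set δ : ℝ := min δ₀ 1 with hδdef
    have hδ : 0 < δ := lt_min hδ₀ one_pos
    filter_upwards [hMe, hdiff δ hδ e0 he0] with n h1 h2
    set A : Set Ω := {ω | δ ≤ dist (V n ω) (Z n ω)} with hAdef
    set B : Set Ω := {ω | M ≤ ‖Z n ω‖} with hBdef
    have hA : MeasurableSet A := measurableSet_le measurable_const ((hV n).dist (hZ n))
    have hB : MeasurableSet B := measurableSet_le measurable_const (hZ n).norm
    have hfb : ∀ (g : ℕ → Ω → E), (∀ m, Measurable (g m)) →
        Integrable (fun ω => f (g n ω)) P := fun g hg =>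
      Integrable.mono' (integrable_const C)
        ((f.continuous.measurable.comp (hg n)).aestronglyMeasurable)
        (Eventually.of_forall fun ω => f.norm_coe_le_norm _)
    have intV : Integrable (fun ω => f (V n ω)) P := hfb V hV
    have intZ : Integrable (fun ω => f (Z n ω)) P := hfb Z hZ
    have hintind : Integrable ((A ∪ B).indicator fun _ => (2 * C : ℝ)) P :=
      (integrable_const _).indicator (hA.union hB)
    have key : ∀ ω, ‖f (V n ω) - f (Z n ω)‖
        ≤ e0 + (A ∪ B).indicator (fun _ => (2 * C : ℝ)) ω := by
      intro ω
      by_cases hω : ω ∈ A ∪ B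
      · rw [Set.indicator_of_mem hω]
        have := f.norm_coe_le_norm (V n ω)
        have := f.norm_coe_le_norm (Z n ω)
        have := norm_sub_le (f (V n ω)) (f (Z n ω))
        linarith
      · rw [Set.indicator_of_notMem hω]
        simp only [Set.mem_union, hAdef, hBdef, Set.mem_setOf_eq, not_or, not_le] at hω
        obtain ⟨hω1, hω2⟩ := hω
        have hZK : Z n ω ∈ Metric.closedBall (0:E) (M+1) := by
          rw [Metric.mem_closedBall, dist_zero_right]; linarith
        have hVK : V n ω ∈ Metric.closedBall (0:E) (M+1) := by
          rw [Metric.mem_closedBall]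
          calc dist (V n ω) 0 ≤ dist (V n ω) (Z n ω) + dist (Z n ω) 0 := dist_triangle _ _ _
            _ ≤ δ + ‖Z n ω‖ := by rw [dist_zero_right]; linarith
            _ ≤ 1 + M := by have : δ ≤ 1 := min_le_right _ _; linarith
            _ = M + 1 := by ring
        have := hucd _ hVK _ hZK (lt_of_lt_of_le hω1 (min_le_left _ _))
        rw [dist_eq_norm] at this
        linarith
    have hPAB : (P (A ∪ B)).toReal ≤ 2 * e0 := by
      have hle : P (A ∪ B) ≤ ENNReal.ofReal e0 + ENNReal.ofReal e0 :=
        (measure_union_le A B).trans (add_le_add h2 h1)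
      rw [← ENNReal.ofReal_add he0.le he0.le] at hle
      exact ENNReal.toReal_le_of_le_ofReal (by linarith) (hle.trans_eq (by ring_nf))
    calc ‖(∫ ω, f (V n ω) ∂P) - ∫ ω, f (Z n ω) ∂P‖
        = ‖∫ ω, (f (V n ω) - f (Z n ω)) ∂P‖ := by rw [integral_sub intV intZ]
      _ ≤ ∫ ω, ‖f (V n ω) - f (Z n ω)‖ ∂P := norm_integral_le_integral_norm _
      _ ≤ ∫ ω, (e0 + (A ∪ B).indicator (fun _ => (2 * C : ℝ)) ω) ∂P :=
          integral_mono (intV.sub intZ).norm ((integrable_const e0).add hintind) key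
      _ = e0 + (P (A ∪ B)).toReal * (2 * C) := by
          rw [integral_add (integrable_const e0) hintind, integral_const,
            integral_indicator_const _ (hA.union hB)]
          simp [measure_univ, smul_eq_mul, measureReal_def]
      _ ≤ e0 + (2 * e0) * (2 * C) := by nlinarith [(P (A ∪ B)).toReal, hPAB]
      _ = e0 * (1 + 4 * C) := by ring
      _ < e0 * (2 + 4 * C) := by
          apply mul_lt_mul_of_pos_left _ he0; linarith
      _ = ε := by rw [he0def]; field_simp
  have := hdz.add hZf
  simpa using this

lemma TendstoInDistribution.comp_map {Ω : Type*} [MeasurableSpace Ω] {P : Measure Ω}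
    {E F : Type*} [MeasurableSpace E] [TopologicalSpace E]
    [MeasurableSpace F] [TopologicalSpace F] [OpensMeasurableSpace F]
    {W : ℕ → Ω → E} {μ : Measure E}
    (h : TendstoInDistribution P W μ) {T : E → F} (hTc : Continuous T) (hTm : Measurable T) :
    TendstoInDistribution P (fun n ω => T (W n ω)) (μ.map T) := by
  intro f
  have h2 := h (f.compContinuous ⟨T, hTc⟩)
  rw [integral_map hTm.aemeasurable (f.continuous.aestronglyMeasurable (μ := μ.map T))]
  simpa using h2

lemma coord_rem {Ω : Type*} [MeasurableSpace Ω] {P : Measure Ω} [IsProbabilityMeasure P]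
    (X Y : ℕ → Ω → ℝ) (hX : ∀ n, Measurable (X n)) (hY : ∀ n, Measurable (Y n))
    (x y : ℝ) (hy : y ≠ 0)
    (hYconv : TendstoInMeasure P Y atTop (fun _ => y))
    (c : ℝ) (hc : c ∈ Set.Ico (0:ℝ) 1)
    (hzero : ∀ n, P {ω | Y n ω = 0} ≤ ENNReal.ofReal (c ^ n))
    {ν : Measure ℝ} [IsProbabilityMeasure ν]
    (hU : TendstoInDistribution P (fun n ω =>
      y * (Real.sqrt n * (X n ω - x)) - x * (Real.sqrt n * (Y n ω - y))) ν)
    (δ e : ℝ) (hδ : 0 < δ) (he : 0 < e) :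
    ∀ᶠ n : ℕ in atTop, P {ω | δ ≤ |Real.sqrt n * (X n ω / nz (Y n ω) - x / y)
      - (Real.sqrt n * (X n ω - x) / y - x * (Real.sqrt n * (Y n ω - y)) / y ^ 2)|}
      ≤ ENNReal.ofReal e := by
  set U : ℕ → Ω → ℝ := fun n ω =>
    y * (Real.sqrt n * (X n ω - x)) - x * (Real.sqrt n * (Y n ω - y)) with hUdef
  have hUmeas : ∀ n, Measurable (U n) := fun n => by
    apply Measurable.sub <;> apply Measurable.const_mul
    · exact ((hX n).sub measurable_const).const_mul _
    · exact ((hY n).sub measurable_const).const_mul _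
  obtain ⟨M, hM, hMe⟩ := tight_of_tendstoInDistribution hUmeas hU (e/4) (by positivity)
  set η : ℝ := δ / M with hηdef
  have hη : 0 < η := by positivity
  have hay : 0 < |y| := abs_pos.mpr hy
  set m : ℝ := min (|y|/2) (η * (y^2 * (|y|/2))) with hmdef
  have hy2 : 0 < y ^ 2 := by positivity
  have hm : 0 < m := lt_min (by positivity) (by positivity)
  have hYev : ∀ᶠ n in atTop, P {ω | m ≤ dist (Y n ω) y} ≤ ENNReal.ofReal (e/4) := by
    have := (tendstoInMeasure_iff_dist.mp hYconv m hm).eventually_lt_const (ENNReal.ofReal_pos.mpr (by positivity : (0:ℝ) < e/4))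
    filter_upwards [this] with n hn using hn.le
  have hcev : ∀ᶠ n in atTop, ENNReal.ofReal (c ^ n) ≤ ENNReal.ofReal (e/2) := by
    have hcc := tendsto_pow_atTop_nhds_zero_of_lt_one hc.1 hc.2
    filter_upwards [hcc.eventually_lt_const (by positivity : (0:ℝ) < e/2)] with n hn
    exact ENNReal.ofReal_le_ofReal hn.le
  filter_upwards [hMe, hYev, hcev] with n h1 h2 h3
  have hsub : {ω | δ ≤ |Real.sqrt n * (X n ω / nz (Y n ω) - x / y)
      - (Real.sqrt n * (X n ω - x) / y - x * (Real.sqrt n * (Y n ω - y)) / y ^ 2)|}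
      ⊆ {ω | Y n ω = 0} ∪ ({ω | M ≤ ‖U n ω‖} ∪ {ω | m ≤ dist (Y n ω) y}) := by
    intro ω hω
    simp only [Set.mem_setOf_eq] at hω
    by_cases h0 : Y n ω = 0
    · exact Or.inl h0
    right
    rcases le_or_gt M ‖U n ω‖ with hcase | hU'
    · exact Or.inl hcase
    rcases le_or_gt m (dist (Y n ω) y) with hcase | hY'
    · exact Or.inr hcase
    exfalso
    rw [Real.norm_eq_abs] at hU'
    rw [Real.dist_eq] at hY'
    have hYlb : |y| / 2 < |Y n ω| := by
      have hxx : |y| ≤ |Y n ω| + |Y n ω - y| := by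
        calc |y| = |Y n ω - (Y n ω - y)| := by congr 1; ring
          _ ≤ |Y n ω| + |Y n ω - y| := abs_sub _ _
      have hm1 : m ≤ |y| / 2 := min_le_left _ _
      linarith
    have hr : Real.sqrt n * (X n ω / nz (Y n ω) - x / y)
        - (Real.sqrt n * (X n ω - x) / y - x * (Real.sqrt n * (Y n ω - y)) / y ^ 2)
        = U n ω * ((y - Y n ω) / (Y n ω * y ^ 2)) := by
      rw [hUdef]
      simp only [nz, if_neg h0]
      field_simp
      ring
    have hBabs : |(y - Y n ω) / (Y n ω * y ^ 2)| < η := by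
      rw [abs_div, abs_mul]
      rw [div_lt_iff₀ (by positivity)]
      have hm2 : m ≤ η * (y ^ 2 * (|y| / 2)) := min_le_right _ _
      have h5 : |y - Y n ω| = |Y n ω - y| := abs_sub_comm _ _
      have h6 : |y ^ 2| = y ^ 2 := abs_of_pos hy2
      rw [h5, h6]
      calc |Y n ω - y| < m := hY'
        _ ≤ η * (y ^ 2 * (|y| / 2)) := hm2
        _ < η * (y ^ 2 * |Y n ω|) := by
            apply mul_lt_mul_of_pos_left _ hη
            apply mul_lt_mul_of_pos_left hYlb hy2
        _ = η * (|Y n ω| * y ^ 2) := by ring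
    have : |U n ω * ((y - Y n ω) / (Y n ω * y ^ 2))| < δ := by
      rw [abs_mul]
      have hprod : |U n ω| * |(y - Y n ω) / (Y n ω * y ^ 2)| < M * η :=
        mul_lt_mul'' hU' hBabs (abs_nonneg _) (abs_nonneg _)
      have hMη : M * η = δ := by rw [hηdef]; field_simp
      linarith
    rw [hr] at hω
    linarith
  calc P {ω | δ ≤ |Real.sqrt n * (X n ω / nz (Y n ω) - x / y)
        - (Real.sqrt n * (X n ω - x) / y - x * (Real.sqrt n * (Y n ω - y)) / y ^ 2)|}
      ≤ P ({ω | Y n ω = 0} ∪ ({ω | M ≤ ‖U n ω‖} ∪ {ω | m ≤ dist (Y n ω) y})) :=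
        measure_mono hsub
    _ ≤ P {ω | Y n ω = 0} + P ({ω | M ≤ ‖U n ω‖} ∪ {ω | m ≤ dist (Y n ω) y}) :=
        measure_union_le _ _
    _ ≤ P {ω | Y n ω = 0} + (P {ω | M ≤ ‖U n ω‖} + P {ω | m ≤ dist (Y n ω) y}) := by
        gcongr
        exact measure_union_le _ _
    _ ≤ ENNReal.ofReal (e/2) + (ENNReal.ofReal (e/4) + ENNReal.ofReal (e/4)) :=
        add_le_add ((hzero n).trans h3) (add_le_add h1 h2)
    _ = ENNReal.ofReal e := by
        rw [← ENNReal.ofReal_add (by positivity) (by positivity),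
          ← ENNReal.ofReal_add (by positivity) (by positivity)]
        congr 1
        ring

theorem stmt_10 {Ω : Type*} [MeasurableSpace Ω] (P : Measure Ω) [IsProbabilityMeasure P]
    (X Y Xp Yp : ℕ → Ω → ℝ)
    (hX : ∀ n, Measurable (X n)) (hY : ∀ n, Measurable (Y n))
    (hXp : ∀ n, Measurable (Xp n)) (hYp : ∀ n, Measurable (Yp n))
    (x y xp yp : ℝ) (hy : y ≠ 0) (hyp : yp ≠ 0)
    (S : Matrix (Fin 4) (Fin 4) ℝ) (hS : S.PosSemidef)
    (hYconv : TendstoInMeasure P Y atTop (fun _ => y))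
    (hYpconv : TendstoInMeasure P Yp atTop (fun _ => yp))
    (c : ℝ) (hc : c ∈ Set.Ico (0 : ℝ) 1)
    (hzero : ∀ n, P {ω | Y n ω = 0} ≤ ENNReal.ofReal (c ^ n))
    (hzerop : ∀ n, P {ω | Yp n ω = 0} ≤ ENNReal.ofReal (c ^ n))
    (μS : Measure (Fin 4 → ℝ)) [IsProbabilityMeasure μS]
    (hgauss : IsCenteredGaussianVec S μS)
    (hclt : TendstoInDistribution P
      (fun n ω => ![Real.sqrt n * (X n ω - x), Real.sqrt n * (Y n ω - y),
        Real.sqrt n * (Xp n ω - xp), Real.sqrt n * (Yp n ω - yp)]) μS) :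
    ∃ μ2 : Measure (Fin 2 → ℝ), IsProbabilityMeasure μ2 ∧
      IsCenteredGaussianVec
        ((!![1 / y, 0; -x / y ^ 2, 0; 0, 1 / yp; 0, -xp / yp ^ 2] :
            Matrix (Fin 4) (Fin 2) ℝ)ᵀ * S *
          !![1 / y, 0; -x / y ^ 2, 0; 0, 1 / yp; 0, -xp / yp ^ 2]) μ2 ∧
      TendstoInDistribution P
        (fun n ω => ![Real.sqrt n * (X n ω / nz (Y n ω) - x / y),
          Real.sqrt n * (Xp n ω / nz (Yp n ω) - xp / yp)]) μ2 := by
  classical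
  set W : ℕ → Ω → (Fin 4 → ℝ) := fun n ω => ![Real.sqrt n * (X n ω - x),
    Real.sqrt n * (Y n ω - y), Real.sqrt n * (Xp n ω - xp),
    Real.sqrt n * (Yp n ω - yp)] with hWdef
  have hWmeas : ∀ n, Measurable (W n) := by
    intro n
    rw [measurable_pi_iff]
    intro i
    fin_cases i <;> simp [hWdef] <;> measurability
  set T : (Fin 4 → ℝ) → (Fin 2 → ℝ) := fun v =>
    ![v 0 / y - x * v 1 / y ^ 2, v 2 / yp - xp * v 3 / yp ^ 2] with hTdef
  have hTc : Continuous T := by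
    rw [continuous_pi_iff]
    intro i
    fin_cases i <;> simp [hTdef] <;> fun_prop
  have hTm : Measurable T := hTc.measurable
  refine ⟨μS.map T, Measure.isProbabilityMeasure_map hTm.aemeasurable, ?_, ?_⟩
  · -- Gaussian part
    intro a
    set b : Fin 4 → ℝ := ![a 0 / y, -(x / y ^ 2) * a 0, a 1 / yp, -(xp / yp ^ 2) * a 1]
      with hbdef
    have hgm : Measurable (fun w : Fin 2 → ℝ => ∑ i, a i * w i) :=
      Finset.measurable_sum _ (fun i _ => (measurable_pi_apply i).const_mul _)
    have hcomp : (μS.map T).map (fun w => ∑ i, a i * w i)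
        = μS.map (fun v => ∑ j, b j * v j) := by
      rw [Measure.map_map hgm hTm]
      congr 1
      funext v
      simp only [Function.comp_apply, hTdef, hbdef, Fin.sum_univ_two, Fin.sum_univ_four,
        Matrix.cons_val_zero, Matrix.cons_val_one, Matrix.head_cons,
        Matrix.cons_val_two, Matrix.tail_cons, Matrix.cons_val_three]
      ring
    rw [hcomp, hgauss b]
    congr 1
    congr 1
    simp only [hbdef, Fin.sum_univ_two, Fin.sum_univ_four, Matrix.mul_apply,
      Matrix.transpose_apply, Matrix.cons_val_zero, Matrix.cons_val_one, Matrix.head_cons,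
      Matrix.cons_val_two, Matrix.tail_cons, Matrix.cons_val_three, Matrix.of_apply,
      Matrix.cons_val', Matrix.empty_val', Matrix.cons_val_fin_one, Matrix.head_fin_const]
    ring
  · -- convergence part
    have hZd : TendstoInDistribution P (fun n ω => T (W n ω)) (μS.map T) :=
      TendstoInDistribution.comp_map hclt hTc hTm
    have hnzm : Measurable nz := by
      unfold nz
      exact Measurable.ite (by simpa using measurableSet_singleton (0:ℝ))
        measurable_const measurable_id
    have hVmeas : ∀ n : ℕ, Measurable (fun ω => ![Real.sqrt n * (X n ω / nz (Y n ω) - x / y),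
        Real.sqrt n * (Xp n ω / nz (Yp n ω) - xp / yp)]) := by
      intro n
      rw [measurable_pi_iff]
      intro i
      fin_cases i <;> simp
      · exact (((hX n).div (hnzm.comp (hY n))).sub measurable_const).const_mul _
      · exact (((hXp n).div (hnzm.comp (hYp n))).sub measurable_const).const_mul _
    have hZmeas : ∀ n, Measurable (fun ω => T (W n ω)) := fun n => hTm.comp (hWmeas n)
    -- distributional limits of the two linearized coordinates
    set L1 : (Fin 4 → ℝ) → ℝ := fun v => y * v 0 - x * v 1 with hL1def
    set L2 : (Fin 4 → ℝ) → ℝ := fun v => yp * v 2 - xp * v 3 with hL2def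
    have hL1c : Continuous L1 := by fun_prop
    have hL2c : Continuous L2 := by fun_prop
    have hU1 : TendstoInDistribution P (fun (n : ℕ) ω =>
        y * (Real.sqrt n * (X n ω - x)) - x * (Real.sqrt n * (Y n ω - y)))
        (μS.map L1) := by
      have h := TendstoInDistribution.comp_map hclt hL1c hL1c.measurable
      have heq : (fun (n : ℕ) ω => L1 (W n ω)) = (fun (n : ℕ) ω =>
          y * (Real.sqrt n * (X n ω - x)) - x * (Real.sqrt n * (Y n ω - y))) := by
        funext n ω
        simp [hL1def, hWdef]
      rwa [heq] at h
    have hU2 : TendstoInDistribution P (fun (n : ℕ) ω =>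
        yp * (Real.sqrt n * (Xp n ω - xp)) - xp * (Real.sqrt n * (Yp n ω - yp)))
        (μS.map L2) := by
      have h := TendstoInDistribution.comp_map hclt hL2c hL2c.measurable
      have heq : (fun (n : ℕ) ω => L2 (W n ω)) = (fun (n : ℕ) ω =>
          yp * (Real.sqrt n * (Xp n ω - xp)) - xp * (Real.sqrt n * (Yp n ω - yp))) := by
        funext n ω
        simp [hL2def, hWdef]
      rwa [heq] at h
    haveI : IsProbabilityMeasure (μS.map L1) :=
      Measure.isProbabilityMeasure_map hL1c.measurable.aemeasurable
    haveI : IsProbabilityMeasure (μS.map L2) :=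
      Measure.isProbabilityMeasure_map hL2c.measurable.aemeasurable
    haveI : IsProbabilityMeasure (μS.map T) := Measure.isProbabilityMeasure_map hTm.aemeasurable
    apply slutsky hZmeas hVmeas hZd
    intro δ hδ e he
    have c1 := coord_rem X Y hX hY x y hy hYconv c hc hzero hU1 δ (e/2) hδ (by positivity)
    have c2 := coord_rem Xp Yp hXp hYp xp yp hyp hYpconv c hc hzerop hU2 δ (e/2) hδ
      (by positivity)
    filter_upwards [c1, c2] with n h1 h2
    have hsub : {ω | δ ≤ dist (![Real.sqrt n * (X n ω / nz (Y n ω) - x / y),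
          Real.sqrt n * (Xp n ω / nz (Yp n ω) - xp / yp)]) (T (W n ω))}
        ⊆ {ω | δ ≤ |Real.sqrt n * (X n ω / nz (Y n ω) - x / y)
            - (Real.sqrt n * (X n ω - x) / y - x * (Real.sqrt n * (Y n ω - y)) / y ^ 2)|}
          ∪ {ω | δ ≤ |Real.sqrt n * (Xp n ω / nz (Yp n ω) - xp / yp)
            - (Real.sqrt n * (Xp n ω - xp) / yp
              - xp * (Real.sqrt n * (Yp n ω - yp)) / yp ^ 2)|} := by
      intro ω hω
      simp only [Set.mem_setOf_eq] at hω
      by_contra hcon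
      simp only [Set.mem_union, Set.mem_setOf_eq, not_or, not_le] at hcon
      obtain ⟨hc1, hc2⟩ := hcon
      have hlt : dist (![Real.sqrt n * (X n ω / nz (Y n ω) - x / y),
          Real.sqrt n * (Xp n ω / nz (Yp n ω) - xp / yp)]) (T (W n ω)) < δ := by
        rw [dist_pi_lt_iff hδ, Fin.forall_fin_two]
        constructor
        · simp only [hTdef, hWdef, Real.dist_eq, Matrix.cons_val_zero, Matrix.cons_val_one,
            Matrix.head_cons, Matrix.cons_val_two, Matrix.tail_cons, Matrix.cons_val_three]
          exact hc1
        · simp only [hTdef, hWdef, Real.dist_eq, Matrix.cons_val_zero, Matrix.cons_val_one,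
            Matrix.head_cons, Matrix.cons_val_two, Matrix.tail_cons, Matrix.cons_val_three]
          exact hc2
      exact absurd hω (not_le.mpr hlt)
    calc P {ω | δ ≤ dist (![Real.sqrt n * (X n ω / nz (Y n ω) - x / y),
          Real.sqrt n * (Xp n ω / nz (Yp n ω) - xp / yp)]) (T (W n ω))}
        ≤ P ({ω | δ ≤ |Real.sqrt n * (X n ω / nz (Y n ω) - x / y)
            - (Real.sqrt n * (X n ω - x) / y - x * (Real.sqrt n * (Y n ω - y)) / y ^ 2)|}
          ∪ {ω | δ ≤ |Real.sqrt n * (Xp n ω / nz (Yp n ω) - xp / yp)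
            - (Real.sqrt n * (Xp n ω - xp) / yp
              - xp * (Real.sqrt n * (Yp n ω - yp)) / yp ^ 2)|}) := measure_mono hsub
      _ ≤ ENNReal.ofReal (e/2) + ENNReal.ofReal (e/2) :=
          (measure_union_le _ _).trans (add_le_add h1 h2)
      _ = ENNReal.ofReal e := by
          rw [← ENNReal.ofReal_add (by positivity) (by positivity)]
          congr 1
          ring
end
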